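/- arXiv:1502.00389 — 4 statements merged into one kernel-verified Lean document; each statement's English description precedes it below -/
import Mathlib

section
/- Let n be a natural number, W a subset of Fin n, v, p : Fin n → Bool, ι a type, and σ : Fin n → Bool → ι a function such that (1) σ i b = σ j b' implies i = j, and (2) for each i, σ i false = σ i true holds if and only if i ∈ W. Then in the multivariate polynomial ring MvPolynomial ι ℤ, ∏_{i : Fin n} X_{σ i (p i)} = ∏_{i : Fin n} X_{σ i (v i)} if and only if p i = v i for every i ∉ W. -/
/-!
A product of variables is the monomial, with coefficient `1`, of its multiset of variables, so
two such products agree iff the multisets do. As `σ i b` determines `i`, the multisets of the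
`σ i (p i)` and of the `σ i (v i)` agree iff `σ i (p i) = σ i (v i)` for every `i`, which holds
iff `p i = v i` or the two ratios at `i` coincide, i.e. `i ∈ W`.
-/

open MvPolynomial

theorem MvPolynomial.prod_X_eq_prod_X_iff {σ R α : Type*} [CommSemiring R] [Nontrivial R]
    (s : Finset α) (f g : α → σ) :
    ∏ i ∈ s, (X (f i) : MvPolynomial σ R) = ∏ i ∈ s, X (g i) ↔
      s.val.map f = s.val.map g := by
  classical
  have prod_eq_monomial (h : α → σ) : ∏ i ∈ s, (X (h i) : MvPolynomial σ R) =
      monomial (Multiset.toFinsupp (s.val.map h)) 1 := by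
    have map_eq_sum : s.val.map h = ∑ i ∈ s, {h i} := by
      rw [← Finset.sum_map_val, ← Multiset.sum_map_singleton (s.val.map h), Multiset.map_map]
      rfl
    simp only [map_eq_sum, map_sum, Multiset.toFinsupp_singleton, monomial_sum_one, X]
  rw [prod_eq_monomial, prod_eq_monomial, (monomial_left_injective one_ne_zero).eq_iff,
    EmbeddingLike.apply_eq_iff_eq]

theorem Finset.map_val_eq_map_val_iff {α β : Type*} {s : Finset α} {f g : α → β}
    (h : ∀ i ∈ s, ∀ j ∈ s, f i = g j → i = j) :
    s.val.map f = s.val.map g ↔ ∀ i ∈ s, f i = g i := by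
  refine ⟨fun hfg i hi => ?_, Multiset.map_congr rfl⟩
  obtain ⟨j, hj, hgf⟩ := Multiset.mem_map.mp (hfg ▸ Multiset.mem_map_of_mem f hi)
  rw [← hgf, h i hi j hj hgf.symm]

theorem Bool.apply_eq_apply_iff {ι : Type*} (s : Bool → ι) (a b : Bool) :
    s a = s b ↔ s false = s true ∨ a = b := by
  cases a <;> cases b <;> simp [eq_comm]

/-- Functional correctness of the naive obfuscated rule: the zero test succeeds
exactly on packets matching the rule `(v, W)`. -/
theorem naive_rule_correct (n : ℕ) (W : Set (Fin n)) (v p : Fin n → Bool)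
    (ι : Type*) (σ : Fin n → Bool → ι)
    (hinj : ∀ i j b b', σ i b = σ j b' → i = j)
    (hW : ∀ i, σ i false = σ i true ↔ i ∈ W) :
    (∏ i : Fin n, (X (σ i (p i)) : MvPolynomial ι ℤ)) =
        ∏ i : Fin n, X (σ i (v i)) ↔
      ∀ i, i ∉ W → p i = v i := by
  rw [prod_X_eq_prod_X_iff, Finset.map_val_eq_map_val_iff fun i _ j _ => hinj i j _ _]
  simp only [Finset.mem_univ, forall_const]
  exact forall_congr' fun i => by rw [Bool.apply_eq_apply_iff, hW, or_iff_not_imp_left]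
end

section
/- Let n be a natural number, W a subset of Fin n, v, p : Fin n → Bool, U a type of encoding-pair units, E a subset of U, ι a type, and α : U → Bool → ι a function such that (1) α u b = α u' b' implies u = u', and (2) for each unit u, α u false = α u true holds if and only if u ∈ E. Let P_r : Fin n → U be an injective assignment of units to bit positions such that P_r i ∈ E if and only if i ∈ W. Then in the multivariate polynomial ring MvPolynomial ι ℤ, ∏_{i : Fin n} X_{α (P_r i) (p i)} = ∏_{i : Fin n} X_{α (P_r i) (v i)} if and only if p i = v i for every i ∉ W. -/
open MvPolynomial

/-- Functional correctness of the basic scheme's obfuscated rule under an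
injective assignment `P_r` of encoding-pair units to bit positions. -/
theorem basic_rule_correct (n : ℕ) (W : Set (Fin n)) (v p : Fin n → Bool)
    (U : Type*) (E : Set U) (ι : Type*) (α : U → Bool → ι)
    (hinj : ∀ u u' b b', α u b = α u' b' → u = u')
    (hE : ∀ u, α u false = α u true ↔ u ∈ E)
    (Pr : Fin n → U) (hPr : Function.Injective Pr)
    (hPrW : ∀ i, Pr i ∈ E ↔ i ∈ W) :
    (∏ i : Fin n, (X (α (Pr i) (p i)) : MvPolynomial ι ℤ)) =
        ∏ i : Fin n, X (α (Pr i) (v i)) ↔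
      ∀ i, i ∉ W → p i = v i := by
  have key : ∀ (u : U) (b b' : Bool), u ∉ E → α u b = α u b' → b = b' := by
    intro u b b' hu h
    by_contra hbb
    have : α u false = α u true := by
      cases b <;> cases b' <;> simp_all
    exact hu ((hE u).1 this)
  constructor
  · intro hprod i hiW
    by_contra hpn
    classical
    set t := α (Pr i) (p i) with ht
    have := congrArg (eval fun s => if s = t then (0 : ℤ) else 1) hprod
    simp only [map_prod, eval_X] at this
    have hL : (∏ j : Fin n, (if α (Pr j) (p j) = t then (0 : ℤ) else 1)) = 0 := by
      apply Finset.prod_eq_zero (Finset.mem_univ i)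
      simp [ht]
    have hR : (∏ j : Fin n, (if α (Pr j) (v j) = t then (0 : ℤ) else 1)) = 1 := by
      apply Finset.prod_eq_one
      intro j _
      have hne : α (Pr j) (v j) ≠ t := by
        intro heq
        have hu : Pr j = Pr i := hinj _ _ _ _ heq
        have hji : j = i := hPr hu
        subst hji
        have : v j = p j := key _ _ _ (fun h => hiW ((hPrW j).1 h)) heq
        exact hpn this.symm
      simp [hne]
    rw [hL, hR] at this
    exact absurd this (by norm_num)
  · intro h
    apply Finset.prod_congr rfl
    intro i _
    by_cases hiW : i ∈ W
    · have hmem : Pr i ∈ E := (hPrW i).2 hiW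
      have heq : α (Pr i) false = α (Pr i) true := (hE _).2 hmem
      congr 1
      cases p i <;> cases v i <;> first | rfl | exact heq | exact heq.symm
    · rw [h i hiW]
end

section
/- Let n be a natural number, W a subset of Fin n, v : Fin n → Bool, U a type of encoding-pair units, E a subset of U, ι a type, and α : U → Bool → ι a function such that (1) α u b = α u' b' implies u = u', and (2) for each unit u, α u false = α u true holds if and only if u ∈ E. Let P_r : Fin n → U satisfy P_r k ∈ E if and only if k ∈ W, and suppose there exist distinct positions i, j ∉ W with P_r i = P_r j and v i ≠ v j. Then there exists a packet p : Fin n → Bool that does NOT match the rule (i.e., p k ≠ v k for some k ∉ W) but for which ∏_{k : Fin n} X_{α (P_r k) (p k)} = ∏_{k : Fin n} X_{α (P_r k) (v k)} in MvPolynomial ι ℤ. -/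
open MvPolynomial

/-- In the basic scheme, a collision of encoding-pair units at two non-wildcard
bit positions with different expected values produces a false positive. -/
theorem basic_rule_false_positive (n : ℕ) (W : Set (Fin n)) (v : Fin n → Bool)
    (U : Type*) (E : Set U) (ι : Type*) (α : U → Bool → ι)
    (hinj : ∀ u u' b b', α u b = α u' b' → u = u')
    (hE : ∀ u, α u false = α u true ↔ u ∈ E)
    (Pr : Fin n → U) (hPrW : ∀ k, Pr k ∈ E ↔ k ∈ W)
    (i j : Fin n) (hij : i ≠ j) (hiW : i ∉ W) (hjW : j ∉ W)
    (hcol : Pr i = Pr j) (hv : v i ≠ v j) :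
    ∃ p : Fin n → Bool,
      (∃ k, k ∉ W ∧ p k ≠ v k) ∧
      (∏ k : Fin n, (X (α (Pr k) (p k)) : MvPolynomial ι ℤ)) =
        ∏ k : Fin n, X (α (Pr k) (v k)) := by
  refine ⟨v ∘ Equiv.swap i j, ⟨i, hiW, ?_⟩, ?_⟩
  · simpa [Equiv.swap_apply_left] using fun h => hv h.symm
  · have key : ∀ k, (X (α (Pr k) (v (Equiv.swap i j k))) : MvPolynomial ι ℤ)
        = X (α (Pr (Equiv.swap i j k)) (v (Equiv.swap i j k))) := by
      intro k
      rcases eq_or_ne k i with rfl | hki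
      · simp [Equiv.swap_apply_left, hcol]
      rcases eq_or_ne k j with rfl | hkj
      · simp [Equiv.swap_apply_right, hcol]
      · simp [Equiv.swap_apply_of_ne_of_ne hki hkj]
    calc (∏ k : Fin n, (X (α (Pr k) (v (Equiv.swap i j k))) : MvPolynomial ι ℤ))
        = ∏ k : Fin n, X (α (Pr (Equiv.swap i j k)) (v (Equiv.swap i j k))) := by
          exact Finset.prod_congr rfl fun k _ => key k
      _ = ∏ k : Fin n, X (α (Pr k) (v k)) :=
          Equiv.prod_comp (Equiv.swap i j) fun k => X (α (Pr k) (v k))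
end

section
/- Let k be a natural number, and for each field i : Fin k let I_i be a finite type of field values and F_i a subset of I_i. Let ι be a type, η : Fin k → ι an injective function, and ξ : (Σ i : Fin k, I_i) → ι an injective function whose range is disjoint from the range of η. Define α : (Σ i : Fin k, I_i) → MvPolynomial ι ℤ by α ⟨i, j⟩ = X_{η i} if j ∈ F_i and α ⟨i, j⟩ = X_{ξ ⟨i, j⟩} otherwise. Then for every packet given by values p_i ∈ I_i for each i : Fin k, ∏_{i : Fin k} α ⟨i, p_i⟩ = ∏_{i : Fin k} X_{η i} holds if and only if p_i ∈ F_i for every i. -/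
open MvPolynomial

/-- Functional correctness of the blocking scheme's obfuscated rule: a packet
`p` passes the zero test iff `p i ∈ F i` for every field `i`. -/
theorem blocking_rule_correct (k : ℕ) (I : Fin k → Type*) [∀ i, Fintype (I i)]
    (F : ∀ i, Set (I i)) (ι : Type*)
    (η : Fin k → ι) (hη : Function.Injective η)
    (ξ : (Σ i : Fin k, I i) → ι) (hξ : Function.Injective ξ)
    (hdisj : ∀ (i : Fin k) (s : Σ i : Fin k, I i), η i ≠ ξ s)
    (α : (Σ i : Fin k, I i) → MvPolynomial ι ℤ)
    (hαin : ∀ (i : Fin k) (j : I i), j ∈ F i → α ⟨i, j⟩ = X (η i))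
    (hαout : ∀ (i : Fin k) (j : I i), j ∉ F i → α ⟨i, j⟩ = X (ξ ⟨i, j⟩)) :
    ∀ p : (i : Fin k) → I i,
      (∏ i : Fin k, α ⟨i, p i⟩) = ∏ i : Fin k, X (η i) ↔ ∀ i, p i ∈ F i := by
  intro p
  classical
  constructor
  · intro h
    by_contra hc
    push_neg at hc
    obtain ⟨i₀, hi₀⟩ := hc
    have h2 := congrArg (eval fun v => if v = ξ ⟨i₀, p i₀⟩ then (0:ℤ) else 1) h
    rw [eval_prod, eval_prod] at h2
    have hL : (∏ i : Fin k,
        eval (fun v => if v = ξ ⟨i₀, p i₀⟩ then (0:ℤ) else 1) (α ⟨i, p i⟩)) = 0 := by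
      apply Finset.prod_eq_zero (Finset.mem_univ i₀)
      rw [hαout i₀ (p i₀) hi₀, eval_X, if_pos rfl]
    have hR : (∏ i : Fin k,
        eval (fun v => if v = ξ ⟨i₀, p i₀⟩ then (0:ℤ) else 1) (X (η i) : MvPolynomial ι ℤ)) = 1 := by
      apply Finset.prod_eq_one
      intro i _
      rw [eval_X, if_neg (hdisj i ⟨i₀, p i₀⟩)]
    rw [hL, hR] at h2
    exact zero_ne_one h2
  · intro h
    exact Finset.prod_congr rfl fun i _ => hαin i (p i) (h i)
end
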